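/- Let a, b, z ∈ ℂ and set u = (a·z, −a + b·z, −b) ∈ ℂ³ and v = (1, conj(z), conj(z)²) ∈ ℂ³. Then ∑_{i} u_i · conj(v_i) = 0 (so the pair ([u],[v]) lies in the twistor space 𝒫⁻ whenever u and v are nonzero), and the cross product of the conjugates satisfies (conj ∘ u) ×₃ (conj ∘ v) = (conj(b)·z·(|z|² + 1) − conj(a)·z², −(conj(b) + conj(a)·|z|²·z), conj(a)·(|z|² + 1) − conj(b)·conj(z)). Hence the twistor projection π⁻([u],[v]) equals the point ψ_{[(a,b)]}(z) of ℂP². -/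

import Mathlib

open Matrix

noncomputable def psiVec (a b z : ℂ) : Fin 3 → ℂ :=
  ![(starRingEnd ℂ) b * z * (z * (starRingEnd ℂ) z + 1) - (starRingEnd ℂ) a * z ^ 2,
    -((starRingEnd ℂ) b + (starRingEnd ℂ) a * (z * (starRingEnd ℂ) z) * z),
    (starRingEnd ℂ) a * (z * (starRingEnd ℂ) z + 1) - (starRingEnd ℂ) b * (starRingEnd ℂ) z]

noncomputable def uVec (a b z : ℂ) : Fin 3 → ℂ := ![a * z, -a + b * z, -b]

noncomputable def vVec (z : ℂ) : Fin 3 → ℂ :=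
  ![1, (starRingEnd ℂ) z, ((starRingEnd ℂ) z) ^ 2]

/-- With `u = (a·z, −a + b·z, −b)` and `v = (1, z̄, z̄²)`, one has `∑ uᵢ · conj vᵢ = 0` (so
`([u],[v])` lies in the twistor space `𝒫⁻` whenever `u` and `v` are nonzero), the cross
product `ū ×₃ v̄` equals the vector defining `ψ_{[(a,b)]}(z)`, and hence the twistor
projection `π⁻([u],[v])` equals the point `ψ_{[(a,b)]}(z)` of `ℂP²`. -/
theorem twistor_lift_of_psi_ab (a b z : ℂ) :
    (∑ i, uVec a b z i * (starRingEnd ℂ) (vVec z i) = 0) ∧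
      ((fun i => (starRingEnd ℂ) (uVec a b z i)) ⨯₃ (fun i => (starRingEnd ℂ) (vVec z i)) =
        psiVec a b z) ∧
      ∀ (h₁ : (fun i => (starRingEnd ℂ) (uVec a b z i)) ⨯₃
            (fun i => (starRingEnd ℂ) (vVec z i)) ≠ 0)
        (h₂ : psiVec a b z ≠ 0),
        Projectivization.mk ℂ
            ((fun i => (starRingEnd ℂ) (uVec a b z i)) ⨯₃ (fun i => (starRingEnd ℂ) (vVec z i)))
            h₁ =
          Projectivization.mk ℂ (psiVec a b z) h₂ := by
  have hcross : (fun i => (starRingEnd ℂ) (uVec a b z i)) ⨯₃ (fun i => (starRingEnd ℂ) (vVec z i)) =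
      psiVec a b z := by
    funext i
    fin_cases i <;>
      simp [uVec, vVec, psiVec, crossProduct, _root_.map_mul, map_add, map_neg, _root_.map_pow] <;> ring
  refine ⟨?_, hcross, ?_⟩
  · simp [Fin.sum_univ_three, uVec, vVec, _root_.map_mul, _root_.map_pow]
    ring
  · intro h₁ h₂
    congr 1
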